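/- For any finite graph G and disjoint nonempty vertex sets X, Y, the number of important (X,Y)-separators of size at most t is at most 4^t. -/

import Mathlib

open SimpleGraph

/-- Open neighborhood of a vertex set: vertices outside `X` adjacent to some vertex of `X`. -/
def vb {V : Type*} (G : SimpleGraph V) (X : Set V) : Set V :=
  {v | v ∉ X ∧ ∃ u ∈ X, G.Adj u v}

/-- Vertices reachable from the set `X` in `G - S`. -/
def reachAvoid {V : Type*} (G : SimpleGraph V) (S X : Set V) : Set V :=
  {v | ∃ x ∈ X, ∃ p : G.Walk x v, ∀ w ∈ p.support, w ∉ S}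

/-- `S` is a vertex `(X,Y)`-separator. -/
def isSep {V : Type*} (G : SimpleGraph V) (X Y S : Set V) : Prop :=
  S ⊆ (X ∪ Y)ᶜ ∧ ∀ y ∈ Y, y ∉ reachAvoid G S X

/-- `S` is an important `(X,Y)`-separator. -/
def isImpSep {V : Type*} (G : SimpleGraph V) (X Y S : Set V) : Prop :=
  isSep G X Y S ∧ (∀ S' ⊂ S, ¬ isSep G X Y S') ∧
    ¬ ∃ T, isSep G X Y T ∧ T.ncard ≤ S.ncard ∧ reachAvoid G S X ⊂ reachAvoid G T X

/-- Edge boundary of a vertex set. -/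
def edgeBoundary {V : Type*} (G : SimpleGraph V) (X : Set V) : Set (Sym2 V) :=
  {e | ∃ a b, e = s(a, b) ∧ G.Adj a b ∧ a ∈ X ∧ b ∉ X}

section Infra
variable {V : Type*} {G : SimpleGraph V} {S S' X X' Y A B : Set V}

lemma mem_reach_self {x : V} (hx : x ∈ X) (hxS : x ∉ S) : x ∈ reachAvoid G S X :=
  ⟨x, hx, Walk.nil, by simpa using hxS⟩
lemma reach_anti (h : S ⊆ S') : reachAvoid G S' X ⊆ reachAvoid G S X := by
  rintro v ⟨x, hx, p, hp⟩
  exact ⟨x, hx, p, fun w hw hwS => hp w hw (h hwS)⟩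
lemma reach_monoX (h : X ⊆ X') : reachAvoid G S X ⊆ reachAvoid G S X' := by
  rintro v ⟨x, hx, p, hp⟩; exact ⟨x, h hx, p, hp⟩
lemma not_mem_S_of_mem_reach {v : V} (h : v ∈ reachAvoid G S X) : v ∉ S := by
  obtain ⟨x, hx, p, hp⟩ := h
  exact hp v p.end_mem_support
lemma reach_adj {u v : V} (hu : u ∈ reachAvoid G S X) (ha : G.Adj u v) (hv : v ∉ S) :
    v ∈ reachAvoid G S X := by
  obtain ⟨x, hx, p, hp⟩ := hu
  refine ⟨x, hx, p.concat ha, ?_⟩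
  intro w hw
  rw [Walk.support_concat, List.mem_append] at hw
  rcases hw with hw | hw
  · exact hp w hw
  · simp at hw; subst hw; exact hv
lemma reach_walk_in {v : V} (h : v ∈ reachAvoid G S X) :
    ∃ x ∈ X, ∃ p : G.Walk x v, (∀ w ∈ p.support, w ∉ S) ∧
      ∀ w ∈ p.support, w ∈ reachAvoid G S X := by
  classical
  obtain ⟨x, hx, p, hp⟩ := h
  refine ⟨x, hx, p, hp, fun w hw => ?_⟩
  exact ⟨x, hx, p.takeUntil w hw, fun z hz => hp z (p.support_takeUntil_subset hw hz)⟩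
lemma vb_disjoint : Disjoint (vb G A) A :=
  Set.disjoint_left.mpr (fun v hv => hv.1)
lemma walk_stay {a v : V} (p : G.Walk a v) (ha : a ∈ A)
    (hp : ∀ w ∈ p.support, w ∉ vb G A) : ∀ w ∈ p.support, w ∈ A := by
  induction p with
  | nil => intro w hw; simp at hw; subst hw; exact ha
  | @cons x b y hadj q ih =>
    have hb : b ∈ A := by
      by_contra hbA
      exact hp b (by simp) ⟨hbA, x, ha, hadj⟩
    intro w hw
    rw [Walk.support_cons, List.mem_cons] at hw
    rcases hw with rfl | hw
    · exact ha
    · exact ih hb (fun z hz => hp z (by rw [Walk.support_cons]; exact List.mem_cons_of_mem _ hz)) w hw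
lemma reach_vb_subset (hXA : X ⊆ A) : reachAvoid G (vb G A) X ⊆ A := by
  rintro v ⟨x, hx, p, hp⟩
  exact walk_stay p (hXA hx) hp v p.end_mem_support
def connIn (G : SimpleGraph V) (X A : Set V) : Prop :=
  ∀ a ∈ A, ∃ x ∈ X, ∃ p : G.Walk x a, ∀ w ∈ p.support, w ∈ A
lemma connIn_reach : connIn G X (reachAvoid G S X) := by
  intro a ha
  obtain ⟨x, hx, p, _, hmem⟩ := reach_walk_in ha
  exact ⟨x, hx, p, hmem⟩
lemma connIn_mono (h : connIn G X A) (hAB : A ⊆ B) :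
    ∀ a ∈ A, ∃ x ∈ X, ∃ p : G.Walk x a, ∀ w ∈ p.support, w ∈ B := by
  intro a ha
  obtain ⟨x, hx, p, hp⟩ := h a ha
  exact ⟨x, hx, p, fun w hw => hAB (hp w hw)⟩
lemma connIn_union (hA : connIn G X A) (hB : connIn G X B) : connIn G X (A ∪ B) := by
  intro a ha
  rcases ha with ha | ha
  · exact connIn_mono hA Set.subset_union_left a ha
  · exact connIn_mono hB Set.subset_union_right a ha
lemma connIn_trans (hX' : ∀ b ∈ X', ∃ x ∈ X, ∃ p : G.Walk x b, ∀ w ∈ p.support, w ∈ A)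
    (hA : connIn G X' A) : connIn G X A := by
  intro a ha
  obtain ⟨x', hx', q, hq⟩ := hA a ha
  obtain ⟨x, hx, p, hp⟩ := hX' x' hx'
  refine ⟨x, hx, p.append q, ?_⟩
  intro w hw
  rw [Walk.support_append, List.mem_append] at hw
  rcases hw with hw | hw
  · exact hp w hw
  · exact hq w (List.mem_of_mem_tail hw)
lemma subset_reach_vb (h : connIn G X A) : A ⊆ reachAvoid G (vb G A) X := by
  intro a ha
  obtain ⟨x, hx, p, hp⟩ := h a ha
  exact ⟨x, hx, p, fun w hw hvb => hvb.1 (hp w hw)⟩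
lemma reach_vb_eq (hXA : X ⊆ A) (h : connIn G X A) : reachAvoid G (vb G A) X = A :=
  Set.Subset.antisymm (reach_vb_subset hXA) (subset_reach_vb h)
lemma vb_union_subset : vb G (A ∪ B) ⊆ vb G A ∪ vb G B := by
  rintro v ⟨hv, u, hu, hadj⟩
  rcases hu with hu | hu
  · exact Or.inl ⟨fun h => hv (Or.inl h), u, hu, hadj⟩
  · exact Or.inr ⟨fun h => hv (Or.inr h), u, hu, hadj⟩
lemma vb_inter_subset : vb G (A ∩ B) ⊆ vb G A ∪ vb G B := by
  rintro v ⟨hv, u, hu, hadj⟩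
  by_cases hA : v ∈ A
  · exact Or.inr ⟨fun h => hv ⟨hA, h⟩, u, hu.2, hadj⟩
  · exact Or.inl ⟨hA, u, hu.1, hadj⟩
lemma vb_inter_union_subset : vb G (A ∩ B) ∩ vb G (A ∪ B) ⊆ vb G A ∩ vb G B := by
  rintro v ⟨⟨_, u, hu, hadj⟩, hv2, _⟩
  exact ⟨⟨fun h => hv2 (Or.inl h), u, hu.1, hadj⟩, ⟨fun h => hv2 (Or.inr h), u, hu.2, hadj⟩⟩
lemma vb_submodular [Fintype V] :
    (vb G (A ∩ B)).ncard + (vb G (A ∪ B)).ncard ≤ (vb G A).ncard + (vb G B).ncard := by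
  classical
  have h1 : vb G (A ∩ B) ∪ vb G (A ∪ B) ⊆ vb G A ∪ vb G B :=
    Set.union_subset vb_inter_subset vb_union_subset
  have h2 := vb_inter_union_subset (G := G) (A := A) (B := B)
  calc (vb G (A ∩ B)).ncard + (vb G (A ∪ B)).ncard
      = (vb G (A ∩ B) ∪ vb G (A ∪ B)).ncard + (vb G (A ∩ B) ∩ vb G (A ∪ B)).ncard :=
        (Set.ncard_union_add_ncard_inter _ _ (Set.toFinite _) (Set.toFinite _)).symm
    _ ≤ (vb G A ∪ vb G B).ncard + (vb G A ∩ vb G B).ncard :=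
        Nat.add_le_add (Set.ncard_le_ncard h1 (Set.toFinite _)) (Set.ncard_le_ncard h2 (Set.toFinite _))
    _ = (vb G A).ncard + (vb G B).ncard := Set.ncard_union_add_ncard_inter _ _ (Set.toFinite _) (Set.toFinite _)
lemma vb_reach_subset_sep : vb G (reachAvoid G S X) ⊆ S := by
  rintro v ⟨hv, u, hu, hadj⟩
  by_contra hvS
  exact hv (reach_adj hu hadj hvS)
lemma isSep_vb (hXA : X ⊆ A) (hYA : Disjoint Y A) (hvbY : Disjoint (vb G A) Y) :
    isSep G X Y (vb G A) := by
  constructor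
  · intro v hv hmem
    rcases hmem with hvX | hvY
    · exact hv.1 (hXA hvX)
    · exact Set.disjoint_left.mp hvbY hv hvY
  · intro y hy hr
    exact Set.disjoint_left.mp hYA hy (reach_vb_subset hXA hr)

/-- basic consequences of being a separator -/
lemma sep_X_subset_reach (h : isSep G X Y S) : X ⊆ reachAvoid G S X :=
  fun x hx => mem_reach_self hx (fun hS => h.1 hS (Or.inl hx))
lemma sep_Y_disj_reach (h : isSep G X Y S) : Disjoint Y (reachAvoid G S X) :=
  Set.disjoint_left.mpr h.2
lemma sep_S_disj_Y (h : isSep G X Y S) : Disjoint S Y :=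
  Set.disjoint_left.mpr (fun v hv hY => h.1 hv (Or.inr hY))
lemma sep_not_Y (h : isSep G X Y S) {v : V} (hv : v ∈ S) : v ∉ Y :=
  fun hY => h.1 hv (Or.inr hY)

/-- the boundary of a separator's reach set is itself a separator -/
lemma isSep_vb_reach (h : isSep G X Y S) : isSep G X Y (vb G (reachAvoid G S X)) := by
  refine isSep_vb (sep_X_subset_reach h) (sep_Y_disj_reach h) ?_
  exact Set.disjoint_left.mpr fun v hv hY =>
    sep_not_Y h (vb_reach_subset_sep hv) hY

/-- boundary of union of reach sets of two separators is a separator -/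
lemma isSep_vb_union_reach {S1 S2 : Set V} (h1 : isSep G X Y S1) (h2 : isSep G X Y S2) :
    isSep G X Y (vb G (reachAvoid G S1 X ∪ reachAvoid G S2 X)) := by
  refine isSep_vb (fun x hx => Or.inl (sep_X_subset_reach h1 hx))
    (Set.disjoint_union_right.mpr ⟨sep_Y_disj_reach h1, sep_Y_disj_reach h2⟩) ?_
  refine Set.disjoint_left.mpr fun v hv hY => ?_
  rcases vb_union_subset hv with hv' | hv'
  · exact sep_not_Y h1 (vb_reach_subset_sep hv') hY
  · exact sep_not_Y h2 (vb_reach_subset_sep hv') hY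
lemma isSep_vb_inter_reach {S1 S2 : Set V} (h1 : isSep G X Y S1) (h2 : isSep G X Y S2) :
    isSep G X Y (vb G (reachAvoid G S1 X ∩ reachAvoid G S2 X)) := by
  refine isSep_vb (fun x hx => ⟨sep_X_subset_reach h1 hx, sep_X_subset_reach h2 hx⟩)
    (Set.disjoint_left.mpr fun y hy hmem => h1.2 y hy hmem.1) ?_
  refine Set.disjoint_left.mpr fun v hv hY => ?_
  rcases vb_inter_subset hv with hv' | hv'
  · exact sep_not_Y h1 (vb_reach_subset_sep hv') hY
  · exact sep_not_Y h2 (vb_reach_subset_sep hv') hY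

lemma reach_vb_union_eq {S1 S2 : Set V} (h1 : isSep G X Y S1) (h2 : isSep G X Y S2) :
    reachAvoid G (vb G (reachAvoid G S1 X ∪ reachAvoid G S2 X)) X
      = reachAvoid G S1 X ∪ reachAvoid G S2 X :=
  reach_vb_eq (fun x hx => Or.inl (sep_X_subset_reach h1 hx)) (connIn_union connIn_reach connIn_reach)

end Infra

section MinCut
variable {V : Type*} [Fintype V] {G : SimpleGraph V} {X Y : Set V} {k : ℕ} {Sstar : Set V}

/-- L9: reach of any minimum separator is inside the maximal one -/
lemma reach_subset_max
    (hmin : ∀ T, isSep G X Y T → k ≤ T.ncard)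
    (hstar : isSep G X Y Sstar) (hstark : Sstar.ncard = k)
    (hmax : ∀ T, isSep G X Y T → T.ncard = k →
      (reachAvoid G T X).ncard ≤ (reachAvoid G Sstar X).ncard)
    {S1 : Set V} (h1 : isSep G X Y S1) (h1k : S1.ncard = k) :
    reachAvoid G S1 X ⊆ reachAvoid G Sstar X := by
  classical
  set R1 := reachAvoid G S1 X with hR1
  set Rs := reachAvoid G Sstar X with hRs
  have hsepU : isSep G X Y (vb G (R1 ∪ Rs)) := isSep_vb_union_reach h1 hstar
  have hsepI : isSep G X Y (vb G (R1 ∩ Rs)) := isSep_vb_inter_reach h1 hstar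
  have hsub := vb_submodular (G := G) (A := R1) (B := Rs)
  have hb1 : (vb G R1).ncard ≤ k := h1k ▸ Set.ncard_le_ncard vb_reach_subset_sep (Set.toFinite _)
  have hbs : (vb G Rs).ncard ≤ k := hstark ▸ Set.ncard_le_ncard vb_reach_subset_sep (Set.toFinite _)
  have hkI : k ≤ (vb G (R1 ∩ Rs)).ncard := hmin _ hsepI
  have hkU : (vb G (R1 ∪ Rs)).ncard = k :=
    le_antisymm (by omega) (hmin _ hsepU)
  have hreachU : reachAvoid G (vb G (R1 ∪ Rs)) X = R1 ∪ Rs := reach_vb_union_eq h1 hstar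
  have hcard : (R1 ∪ Rs).ncard ≤ Rs.ncard := by
    have := hmax _ hsepU hkU
    rwa [hreachU] at this
  have : Rs = R1 ∪ Rs :=
    Set.eq_of_subset_of_ncard_le Set.subset_union_right hcard (Set.toFinite _)
  intro a ha
  have : a ∈ R1 ∪ Rs := Or.inl ha
  rwa [← ‹Rs = R1 ∪ Rs›] at this

/-- L10: pushing lemma: reach of the max min separator is inside reach of any important separator -/
lemma pushing
    (hmin : ∀ T, isSep G X Y T → k ≤ T.ncard)
    (hstar : isSep G X Y Sstar) (hstark : Sstar.ncard = k)
    {S : Set V} (himp : isImpSep G X Y S) :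
    reachAvoid G Sstar X ⊆ reachAvoid G S X := by
  classical
  by_contra hnot
  set A := reachAvoid G S X with hA
  set B := reachAvoid G Sstar X with hB
  have hsepU : isSep G X Y (vb G (A ∪ B)) := isSep_vb_union_reach himp.1 hstar
  have hsepI : isSep G X Y (vb G (A ∩ B)) := isSep_vb_inter_reach himp.1 hstar
  have hsub := vb_submodular (G := G) (A := A) (B := B)
  have hbA : (vb G A).ncard ≤ S.ncard := Set.ncard_le_ncard vb_reach_subset_sep (Set.toFinite _)
  have hbB : (vb G B).ncard ≤ k := hstark ▸ Set.ncard_le_ncard vb_reach_subset_sep (Set.toFinite _)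
  have hkI : k ≤ (vb G (A ∩ B)).ncard := hmin _ hsepI
  have hUcard : (vb G (A ∪ B)).ncard ≤ S.ncard := by omega
  have hreachU : reachAvoid G (vb G (A ∪ B)) X = A ∪ B := reach_vb_union_eq himp.1 hstar
  refine himp.2.2 ⟨vb G (A ∪ B), hsepU, hUcard, ?_⟩
  rw [hreachU]
  refine ⟨Set.subset_union_left, fun hsub' => hnot ?_⟩
  intro b hb
  exact hsub' (Or.inr hb)

end MinCut

section BranchB
variable {V : Type*} [Fintype V] {G : SimpleGraph V} {X Y : Set V} {k : ℕ} {Sstar : Set V}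

/-- minimum separators equal the boundary of their reach -/
lemma vb_reach_eq_self
    (hmin : ∀ T, isSep G X Y T → k ≤ T.ncard)
    (hstar : isSep G X Y Sstar) (hstark : Sstar.ncard = k) :
    vb G (reachAvoid G Sstar X) = Sstar := by
  refine Set.eq_of_subset_of_ncard_le vb_reach_subset_sep ?_ (Set.toFinite _)
  rw [hstark]
  exact hmin _ (isSep_vb_reach hstar)

/-- key helper for branches: vertices of X' = R* ∪ {v} are connected to X within any superset -/
lemma X'_connected {v : V} {A : Set V}
    (hvb : v ∈ vb G (reachAvoid G Sstar X))
    (hRA : reachAvoid G Sstar X ⊆ A) (hvA : v ∈ A) :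
    ∀ b ∈ reachAvoid G Sstar X ∪ {v}, ∃ x ∈ X, ∃ p : G.Walk x b, ∀ w ∈ p.support, w ∈ A := by
  rintro b (hb | hb)
  · exact connIn_mono connIn_reach hRA b hb
  · simp only [Set.mem_singleton_iff] at hb
    subst hb
    obtain ⟨hvR, u, hu, hadj⟩ := hvb
    obtain ⟨x, hx, p, hp⟩ := connIn_reach (G := G) (X := X) (S := Sstar) u hu
    refine ⟨x, hx, p.concat hadj, ?_⟩
    intro w hw
    rw [Walk.support_concat, List.mem_append] at hw
    rcases hw with hw | hw
    · exact hRA (hp w hw)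
    · simp at hw; subst hw; exact hvA

/-- L11: after pushing X to X' = R* ∪ {v}, every separator has size > k -/
lemma lambda_increase
    (hmin : ∀ T, isSep G X Y T → k ≤ T.ncard)
    (hstar : isSep G X Y Sstar) (hstark : Sstar.ncard = k)
    (hmax : ∀ T, isSep G X Y T → T.ncard = k →
      (reachAvoid G T X).ncard ≤ (reachAvoid G Sstar X).ncard)
    {v : V} (hv : v ∈ Sstar) :
    ∀ T, isSep G (reachAvoid G Sstar X ∪ {v}) Y T → k + 1 ≤ T.ncard := by
  classical
  intro T hT
  set Rs := reachAvoid G Sstar X with hRs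
  set X' : Set V := Rs ∪ {v} with hX'
  have hvb : v ∈ vb G Rs := by rw [vb_reach_eq_self hmin hstar hstark]; exact hv
  have hXX' : X ⊆ X' := fun x hx => Or.inl (sep_X_subset_reach hstar hx)
  have hX'T : ∀ b ∈ X', b ∉ T := fun b hb hbT => hT.1 hbT (Or.inl hb)
  set A := reachAvoid G T X' with hA
  have hX'A : X' ⊆ A := fun b hb => mem_reach_self hb (hX'T b hb)
  have hvbT : vb G A ⊆ T := vb_reach_subset_sep
  have hXA : X ⊆ A := fun x hx => hX'A (hXX' hx)
  have hTsepX : isSep G X Y T := by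
    constructor
    · intro s hs hmem
      rcases hmem with hsX | hsY
      · exact hT.1 hs (Or.inl (hXX' hsX))
      · exact hT.1 hs (Or.inr hsY)
    · intro y hy hr
      exact hT.2 y hy (reach_monoX hXX' hr)
  have hsepA : isSep G X Y (vb G A) := by
    refine isSep_vb hXA (Set.disjoint_left.mpr hT.2) ?_
    exact Set.disjoint_left.mpr fun w hw hY => sep_not_Y hTsepX (hvbT hw) hY
  have hreachA : reachAvoid G (vb G A) X = A := by
    refine reach_vb_eq hXA (connIn_trans (X' := X') ?_ connIn_reach)
    exact X'_connected hvb (fun r hr => hX'A (Or.inl hr)) (hX'A (Or.inr rfl))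
  -- if T had size ≤ k, then vb A would be a minimum separator with reach ⊋ R*
  by_contra hcon
  push_neg at hcon
  have hTk : T.ncard ≤ k := by omega
  have hvbk : (vb G A).ncard = k :=
    le_antisymm (le_trans (Set.ncard_le_ncard hvbT (Set.toFinite _)) hTk) (hmin _ hsepA)
  have hsub : reachAvoid G (vb G A) X ⊆ Rs :=
    reach_subset_max hmin hstar hstark hmax hsepA hvbk
  rw [hreachA] at hsub
  have hvRs : v ∈ Rs := hsub (hX'A (Or.inr rfl))
  exact hvb.1 hvRs

/-- L12: an important separator avoiding v remains important after pushing X -/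
lemma important_push
    (hmin : ∀ T, isSep G X Y T → k ≤ T.ncard)
    (hstar : isSep G X Y Sstar) (hstark : Sstar.ncard = k)
    {S : Set V} (himp : isImpSep G X Y S) {v : V} (hv : v ∈ Sstar) (hvS : v ∉ S) :
    isImpSep G (reachAvoid G Sstar X ∪ {v}) Y S := by
  classical
  set Rs := reachAvoid G Sstar X with hRs
  set X' : Set V := Rs ∪ {v} with hX'
  have hvb : v ∈ vb G Rs := by rw [vb_reach_eq_self hmin hstar hstark]; exact hv
  have hpush : Rs ⊆ reachAvoid G S X := pushing hmin hstar hstark himp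
  have hXX' : X ⊆ X' := fun x hx => Or.inl (sep_X_subset_reach hstar hx)
  have hvreach : v ∈ reachAvoid G S X := by
    obtain ⟨_, u, hu, hadj⟩ := hvb
    exact reach_adj (hpush hu) hadj hvS
  have hX'reach : X' ⊆ reachAvoid G S X := by
    rintro b (hb | hb)
    · exact hpush hb
    · simp only [Set.mem_singleton_iff] at hb; subst hb; exact hvreach
  -- reach from X' equals reach from X
  have hreq : reachAvoid G S X' = reachAvoid G S X := by
    refine Set.Subset.antisymm ?_ (reach_monoX hXX')
    rintro a ⟨x', hx', q, hq⟩
    obtain ⟨x, hx, p, hp⟩ := hX'reach hx'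
    refine ⟨x, hx, p.append q, ?_⟩
    intro w hw
    rw [Walk.support_append, List.mem_append] at hw
    rcases hw with hw | hw
    · exact hp w hw
    · exact hq w (List.mem_of_mem_tail hw)
  have hsep' : isSep G X' Y S := by
    constructor
    · intro s hs hmem
      rcases hmem with hsX' | hsY
      · exact not_mem_S_of_mem_reach (hX'reach hsX') hs
      · exact sep_not_Y himp.1 hs hsY
    · intro y hy
      rw [hreq]; exact himp.1.2 y hy
  refine ⟨hsep', ?_, ?_⟩
  · intro S'' hS'' hsepS''
    refine himp.2.1 S'' hS'' ?_
    constructor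
    · intro s hs hmem
      rcases hmem with hsX | hsY
      · exact hsepS''.1 hs (Or.inl (hXX' hsX))
      · exact hsepS''.1 hs (Or.inr hsY)
    · intro y hy hr
      exact hsepS''.2 y hy (reach_monoX hXX' hr)
  · rintro ⟨T, hT, hTle, hTstr⟩
    rw [hreq] at hTstr
    set A := reachAvoid G T X' with hA
    have hX'T : ∀ b ∈ X', b ∉ T := fun b hb hbT => hT.1 hbT (Or.inl hb)
    have hX'A : X' ⊆ A := fun b hb => mem_reach_self hb (hX'T b hb)
    have hvbT : vb G A ⊆ T := vb_reach_subset_sep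
    have hXA : X ⊆ A := fun x hx => hX'A (hXX' hx)
    have hTsepX : isSep G X Y T := by
      constructor
      · intro s hs hmem
        rcases hmem with hsX | hsY
        · exact hT.1 hs (Or.inl (hXX' hsX))
        · exact hT.1 hs (Or.inr hsY)
      · intro y hy hr
        exact hT.2 y hy (reach_monoX hXX' hr)
    have hsepA : isSep G X Y (vb G A) := by
      refine isSep_vb hXA (Set.disjoint_left.mpr hT.2) ?_
      exact Set.disjoint_left.mpr fun w hw hY => sep_not_Y hTsepX (hvbT hw) hY
    have hreachA : reachAvoid G (vb G A) X = A := by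
      refine reach_vb_eq hXA (connIn_trans (X' := X') ?_ connIn_reach)
      intro b hb
      obtain ⟨x, hx, p, hp⟩ := connIn_reach (G := G) (X := X) (S := S) b (hX'reach hb)
      exact ⟨x, hx, p, fun w hw => hTstr.1 (hp w hw)⟩
    refine himp.2.2 ⟨vb G A, hsepA, le_trans (Set.ncard_le_ncard hvbT (Set.toFinite _)) hTle, ?_⟩
    rw [hreachA]
    exact hTstr

end BranchB

section BranchA
variable {V : Type*}

/-- delete a vertex by isolating it -/
def delV (G : SimpleGraph V) (v : V) : SimpleGraph V where
  Adj a b := G.Adj a b ∧ a ≠ v ∧ b ≠ v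
  symm := ⟨fun a b ⟨h, ha, hb⟩ => ⟨h.symm, hb, ha⟩⟩
  loopless := ⟨fun a ⟨h, _, _⟩ => G.loopless.irrefl a h⟩

variable {G : SimpleGraph V} {v : V} {X Y W S : Set V}

lemma walk_to_delV {x y : V} (p : G.Walk x y) (h : ∀ w ∈ p.support, w ≠ v) :
    ∃ q : (delV G v).Walk x y, q.support = p.support := by
  induction p with
  | nil => exact ⟨Walk.nil, rfl⟩
  | @cons a b c hadj q ih =>
    have ha : a ≠ v := h a (by simp)
    have hb : b ≠ v := h b (by simp [Walk.support_cons])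
    obtain ⟨q', hq'⟩ := ih (fun w hw => h w (by rw [Walk.support_cons]; exact List.mem_cons_of_mem _ hw))
    exact ⟨Walk.cons (show (delV G v).Adj a b from ⟨hadj, ha, hb⟩) q', by rw [Walk.support_cons, Walk.support_cons, hq']⟩

lemma walk_from_delV {x y : V} (p : (delV G v).Walk x y) :
    ∃ q : G.Walk x y, q.support = p.support := by
  induction p with
  | nil => exact ⟨Walk.nil, rfl⟩
  | @cons a b c hadj q ih =>
    obtain ⟨q', hq'⟩ := ih
    exact ⟨Walk.cons hadj.1 q', by rw [Walk.support_cons, Walk.support_cons, hq']⟩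

lemma walk_delV_ne {x y : V} (p : (delV G v).Walk x y) (hx : x ≠ v) :
    ∀ w ∈ p.support, w ≠ v := by
  induction p with
  | nil => intro w hw; simp at hw; subst hw; exact hx
  | @cons a b c hadj q ih =>
    intro w hw
    rw [Walk.support_cons, List.mem_cons] at hw
    rcases hw with rfl | hw
    · exact hx
    · exact ih hadj.2.2 w hw

lemma reach_delV_erase (hvX : v ∉ X) :
    reachAvoid (delV G v) W X = reachAvoid (delV G v) (W \ {v}) X := by
  apply Set.Subset.antisymm (reach_anti Set.diff_subset)
  rintro a ⟨x, hx, p, hp⟩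
  refine ⟨x, hx, p, fun w hw hwW => ?_⟩
  have hwv : w ≠ v := walk_delV_ne p (fun h => hvX (h ▸ hx)) w hw
  exact hp w hw ⟨hwW, hwv⟩

lemma reach_delV_transfer (hvX : v ∉ X) (hvW : v ∈ W) :
    reachAvoid (delV G v) (W \ {v}) X = reachAvoid G W X := by
  apply Set.Subset.antisymm
  · rintro a ⟨x, hx, p, hp⟩
    obtain ⟨q, hq⟩ := walk_from_delV p
    refine ⟨x, hx, q, fun w hw hwW => ?_⟩
    have hwv : w ≠ v := walk_delV_ne p (fun h => hvX (h ▸ hx)) w (hq ▸ hw)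
    exact hp w (hq ▸ hw) ⟨hwW, hwv⟩
  · rintro a ⟨x, hx, p, hp⟩
    have hne : ∀ w ∈ p.support, w ≠ v := fun w hw h => hp w hw (h ▸ hvW)
    obtain ⟨q, hq⟩ := walk_to_delV p hne
    exact ⟨x, hx, q, fun w hw hwW => hp w (hq ▸ hw) hwW.1⟩

/-- a separator in `delV G v` yields a separator in `G` after adding `v` -/
lemma isSep_delV_up (hvXY : v ∈ (X ∪ Y)ᶜ) {T : Set V} (hT : isSep (delV G v) X Y T) :
    isSep G X Y (T ∪ {v}) := by
  have hvX : v ∉ X := fun h => hvXY (Or.inl h)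
  constructor
  · intro s hs
    rcases hs with hs | hs
    · exact hT.1 hs
    · simp only [Set.mem_singleton_iff] at hs; subst hs; exact hvXY
  · intro y hy
    rw [← reach_delV_transfer hvX (Or.inr rfl)]
    intro hr
    have : (T ∪ {v}) \ {v} = T \ {v} := by
      ext w; simp only [Set.mem_diff, Set.mem_union, Set.mem_singleton_iff]; tauto
    rw [this, ← reach_delV_erase hvX] at hr
    exact hT.2 y hy hr

/-- L14: important in G with v ∈ S gives important in delV G v -/
lemma important_delV [Fintype V] {S : Set V} (himp : isImpSep G X Y S) (hvS : v ∈ S) :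
    isImpSep (delV G v) X Y (S \ {v}) := by
  have hvXY : v ∈ (X ∪ Y)ᶜ := himp.1.1 hvS
  have hvX : v ∉ X := fun h => hvXY (Or.inl h)
  have hrS : reachAvoid (delV G v) (S \ {v}) X = reachAvoid G S X :=
    reach_delV_transfer hvX hvS
  refine ⟨⟨fun s hs => himp.1.1 hs.1, fun y hy => hrS ▸ himp.1.2 y hy⟩, ?_, ?_⟩
  · intro S'' hS'' hsep''
    have hvS'' : v ∉ S'' := fun h => (hS''.1 h).2 rfl
    refine himp.2.1 (S'' ∪ {v}) ?_ (isSep_delV_up hvXY hsep'')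
    constructor
    · intro s hs
      rcases hs with hs | hs
      · exact (hS''.1 hs).1
      · simp only [Set.mem_singleton_iff] at hs; subst hs; exact hvS
    · intro hsub
      obtain ⟨a, ha, ha''⟩ := Set.exists_of_ssubset hS''
      exact ha'' (Or.elim (hsub ha.1) id (fun h => absurd h ha.2))
  · rintro ⟨T', hT', hle, hstr⟩
    set T : Set V := (T' \ {v}) ∪ {v} with hTdef
    have hTv : T \ {v} = T' \ {v} := by
      ext w; simp only [hTdef, Set.mem_diff, Set.mem_union, Set.mem_singleton_iff]; tauto
    have hrT : reachAvoid G T X = reachAvoid (delV G v) T' X := by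
      rw [← reach_delV_transfer hvX (Or.inr rfl), hTv, ← reach_delV_erase hvX]
    have hsepT : isSep G X Y T := by
      constructor
      · intro s hs
        rcases hs with hs | hs
        · exact hT'.1 hs.1
        · simp only [Set.mem_singleton_iff] at hs; subst hs; exact hvXY
      · intro y hy; rw [hrT]; exact hT'.2 y hy
    have hScard : S.ncard = (S \ {v}).ncard + 1 := by
      have := Set.ncard_diff_singleton_add_one hvS (Set.toFinite _)
      omega
    have hTcard : T.ncard ≤ S.ncard := by
      have h1 : T.ncard ≤ (T' \ {v}).ncard + 1 := by
        calc T.ncard ≤ (T' \ {v}).ncard + ({v} : Set V).ncard := Set.ncard_union_le _ _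
          _ = (T' \ {v}).ncard + 1 := by rw [Set.ncard_singleton]
      have h2 : (T' \ {v}).ncard ≤ T'.ncard := Set.ncard_le_ncard Set.diff_subset (Set.toFinite _)
      omega
    refine himp.2.2 ⟨T, hsepT, hTcard, ?_⟩
    rw [hrT, ← hrS]
    exact hstr

end BranchA

section Main
variable {V : Type*} [Fintype V]

lemma main_count : ∀ (μ : ℕ) (G : SimpleGraph V) (X Y : Set V) (t lb : ℕ),
    (∀ T, isSep G X Y T → lb ≤ T.ncard) → 2 * t ≤ μ + lb →
    {S : Set V | isImpSep G X Y S ∧ S.ncard ≤ t}.ncard ≤ 2 ^ μ := by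
  intro μ
  induction μ using Nat.strong_induction_on with
  | _ μ ih =>
  intro G X Y t lb hlb hμ
  classical
  by_cases hsep : ∃ T, isSep G X Y T
  swap
  · have hE : {S : Set V | isImpSep G X Y S ∧ S.ncard ≤ t} = ∅ := by
      ext S
      simp only [Set.mem_setOf_eq, Set.mem_empty_iff_false, iff_false, not_and]
      intro h _
      exact hsep ⟨S, h.1⟩
    rw [hE]
    simp
  obtain ⟨T0, hT0⟩ := hsep
  have hex : ∃ n, ∃ T, isSep G X Y T ∧ T.ncard = n := ⟨T0.ncard, T0, hT0, rfl⟩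
  set k := Nat.find hex with hkdef
  obtain ⟨Sm, hSm, hSmk⟩ := Nat.find_spec hex
  have hmin : ∀ T, isSep G X Y T → k ≤ T.ncard := fun T hT => Nat.find_min' hex ⟨T, hT, rfl⟩
  rcases Nat.eq_zero_or_pos k with hk0 | hkpos
  · have hSmE : Sm = ∅ := (Set.ncard_eq_zero (Set.toFinite _)).mp (by omega)
    have hsub : {S : Set V | isImpSep G X Y S ∧ S.ncard ≤ t} ⊆ {∅} := by
      rintro S ⟨himp, _⟩
      by_contra hne
      simp only [Set.mem_singleton_iff] at hne
      have hss : (∅ : Set V) ⊂ S := Set.empty_ssubset.mpr (Set.nonempty_iff_ne_empty.mpr hne)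
      exact himp.2.1 ∅ hss (hSmE ▸ hSm)
    calc {S : Set V | isImpSep G X Y S ∧ S.ncard ≤ t}.ncard
        ≤ ({∅} : Set (Set V)).ncard := Set.ncard_le_ncard hsub (Set.toFinite _)
      _ = 1 := Set.ncard_singleton _
      _ ≤ 2 ^ μ := Nat.one_le_two_pow
  by_cases htk : t < k
  · have hE : {S : Set V | isImpSep G X Y S ∧ S.ncard ≤ t} = ∅ := by
      ext S
      simp only [Set.mem_setOf_eq, Set.mem_empty_iff_false, iff_false, not_and]
      intro himp hc
      exact absurd (le_trans (hmin S himp.1) hc) (by omega)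
    rw [hE]; simp
  push_neg at htk
  have hlbk : lb ≤ k := le_trans (hlb Sm hSm) (le_of_eq hSmk)
  have hμ1 : 1 ≤ μ := by omega
  have h2tk : 2 * t ≤ μ + k := by omega
  set M := {T : Set V | isSep G X Y T ∧ T.ncard = k} with hM
  obtain ⟨Sstar, hSstarM, hmaxw⟩ :=
    Set.Finite.exists_maximalFor (fun T => (reachAvoid G T X).ncard) M (Set.toFinite _)
      ⟨Sm, hSm, hSmk⟩
  obtain ⟨hstar, hstark⟩ := hSstarM
  have hmax : ∀ T, isSep G X Y T → T.ncard = k →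
      (reachAvoid G T X).ncard ≤ (reachAvoid G Sstar X).ncard := by
    intro T hT hTk
    by_contra h
    push_neg at h
    exact absurd (hmaxw ⟨hT, hTk⟩ (le_of_lt h)) (not_le.mpr h)
  have hSstarNe : Sstar.Nonempty := by
    rw [Set.nonempty_iff_ne_empty]
    intro h
    rw [h, Set.ncard_empty] at hstark
    omega
  obtain ⟨v, hv⟩ := hSstarNe
  set I := {S : Set V | isImpSep G X Y S ∧ S.ncard ≤ t} with hIdef
  have hI : I ⊆ {S ∈ I | v ∈ S} ∪ {S ∈ I | v ∉ S} := by
    intro S hS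
    by_cases h : v ∈ S
    · exact Or.inl ⟨hS, h⟩
    · exact Or.inr ⟨hS, h⟩
  have hbcount : {S ∈ I | v ∉ S}.ncard ≤ 2 ^ (μ - 1) := by
    have hb : {S ∈ I | v ∉ S} ⊆
        {S : Set V | isImpSep G (reachAvoid G Sstar X ∪ {v}) Y S ∧ S.ncard ≤ t} := by
      rintro S ⟨⟨himp, hcard⟩, hvS⟩
      exact ⟨important_push hmin hstar hstark himp hv hvS, hcard⟩
    refine le_trans (Set.ncard_le_ncard hb (Set.toFinite _)) ?_
    exact ih (μ - 1) (by omega) G (reachAvoid G Sstar X ∪ {v}) Y t (k + 1)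
      (lambda_increase hmin hstar hstark hmax hv) (by omega)
  have hacount : {S ∈ I | v ∈ S}.ncard ≤ 2 ^ (μ - 1) := by
    have hinj : Set.InjOn (fun S => S \ {v}) {S ∈ I | v ∈ S} := by
      intro S1 h1 S2 h2 he
      simp only at he
      rw [← Set.diff_union_of_subset (Set.singleton_subset_iff.mpr h1.2),
        ← Set.diff_union_of_subset (Set.singleton_subset_iff.mpr h2.2), he]
    have himg : (fun S => S \ {v}) '' {S ∈ I | v ∈ S} ⊆
        {S : Set V | isImpSep (delV G v) X Y S ∧ S.ncard ≤ t - 1} := by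
      rintro _ ⟨S, ⟨⟨himp, hcard⟩, hvS⟩, rfl⟩
      dsimp only
      refine ⟨important_delV himp hvS, ?_⟩
      have := Set.ncard_diff_singleton_add_one hvS (Set.toFinite _)
      omega
    have hG'lb : ∀ T, isSep (delV G v) X Y T → k - 1 ≤ T.ncard := by
      intro T hT
      have h1 := hmin (T ∪ {v}) (isSep_delV_up (hstar.1 hv) hT)
      have h2 : (T ∪ {v}).ncard ≤ T.ncard + 1 := by
        calc (T ∪ {v}).ncard ≤ T.ncard + ({v} : Set V).ncard := Set.ncard_union_le _ _
          _ = T.ncard + 1 := by rw [Set.ncard_singleton]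
      omega
    calc {S ∈ I | v ∈ S}.ncard = ((fun S => S \ {v}) '' {S ∈ I | v ∈ S}).ncard :=
          (Set.ncard_image_of_injOn hinj).symm
      _ ≤ {S : Set V | isImpSep (delV G v) X Y S ∧ S.ncard ≤ t - 1}.ncard :=
          Set.ncard_le_ncard himg (Set.toFinite _)
      _ ≤ 2 ^ (μ - 1) := ih (μ - 1) (by omega) (delV G v) X Y (t - 1) (k - 1) hG'lb (by omega)
  calc I.ncard ≤ ({S ∈ I | v ∈ S} ∪ {S ∈ I | v ∉ S}).ncard :=
        Set.ncard_le_ncard hI (Set.toFinite _)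
    _ ≤ {S ∈ I | v ∈ S}.ncard + {S ∈ I | v ∉ S}.ncard := Set.ncard_union_le _ _
    _ ≤ 2 ^ (μ - 1) + 2 ^ (μ - 1) := Nat.add_le_add hacount hbcount
    _ = 2 ^ μ := by
        rw [← two_mul, ← pow_succ']
        congr 1
        omega

end Main


/-- There are at most `4 ^ t` important separators of size at most `t`. -/
theorem important_separators_count {V : Type*} [Fintype V] (G : SimpleGraph V)
    (X Y : Set V) (hXne : X.Nonempty) (hYne : Y.Nonempty) (hdisj : Disjoint X Y) (t : ℕ) :
    {S : Set V | isImpSep G X Y S ∧ S.ncard ≤ t}.ncard ≤ 4 ^ t := by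
  have h := main_count (2 * t) G X Y t 0 (fun T _ => Nat.zero_le _) (by omega)
  calc {S : Set V | isImpSep G X Y S ∧ S.ncard ≤ t}.ncard ≤ 2 ^ (2 * t) := h
    _ = 4 ^ t := by rw [pow_mul]; norm_num
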